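/- arXiv:0903.4689 — 4 statements merged into one kernel-verified Lean document; each statement's English description precedes it below -/
import Mathlib

section
/- Let A and B be abelian categories, F : A → B a right exact additive functor, G : A → B a left exact additive functor, and T : F ⟹ G a natural transformation. Define the category C(F,G,T) whose objects are quadruples (A, B, m, n) with A ∈ A, B ∈ B, m : F(A) → B, n : B → G(A) satisfying n ∘ m = T_A, and whose morphisms (A,B,m,n) → (A',B',m',n') are pairs (a : A → A', b : B → B') making the evident squares commute. Then C(F,G,T) is an abelian category. -/
open CategoryTheory CategoryTheory.Limits

universe v₁ v₂ u₁ u₂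

variable {A : Type u₁} [Category.{v₁} A] {B : Type u₂} [Category.{v₂} B]

/-- An object of the MacPherson–Vilonen category `C(F,G,T)`: a quadruple
`(A, B, m, n)` with `m : F(A) ⟶ B`, `n : B ⟶ G(A)` and `n ∘ m = T_A`. -/
structure MVObj (F G : A ⥤ B) (T : F ⟶ G) where
  a : A
  b : B
  m : F.obj a ⟶ b
  n : b ⟶ G.obj a
  fac : m ≫ n = T.app a

/-- A morphism of the MacPherson–Vilonen category: a pair `(a, b)` making the two
evident squares commute. -/
@[ext]
structure MVHom {F G : A ⥤ B} {T : F ⟶ G} (X Y : MVObj F G T) where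
  fa : X.a ⟶ Y.a
  fb : X.b ⟶ Y.b
  comm_m : F.map fa ≫ Y.m = X.m ≫ fb
  comm_n : X.n ≫ G.map fa = fb ≫ Y.n

instance {F G : A ⥤ B} {T : F ⟶ G} : Category (MVObj F G T) where
  Hom := MVHom
  id X := ⟨𝟙 X.a, 𝟙 X.b, by simp, by simp⟩
  comp f g := ⟨f.fa ≫ g.fa, f.fb ≫ g.fb, by
      rw [Functor.map_comp, Category.assoc, g.comm_m, ← Category.assoc, f.comm_m,
        Category.assoc], by
      rw [Functor.map_comp, ← Category.assoc, f.comm_n, Category.assoc, g.comm_n,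
        ← Category.assoc]⟩
  id_comp f := by apply MVHom.ext <;> simp
  comp_id f := by apply MVHom.ext <;> simp
  assoc f g h := by apply MVHom.ext <;> simp

/-!
Hom groups of `C(F,G,T)` are subgroups of `(A ⟶ A') × (B ⟶ B')`, and biproducts, kernels and
cokernels are computed componentwise. For the kernel of `(a, b)` the map `ker b ⟶ G (ker a)` exists
because the left exact `G` preserves the kernel of `a`; dually the right exact `F` supplies
`F (coker a) ⟶ coker b`. A componentwise kernel fork is a limit as soon as `G` keeps its
`A`-component mono, and dually for cokernels. Hence monos and epis of `C(F,G,T)` are componentwise,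
and their normality is inherited from `A` and `B`.
-/

namespace CategoryTheory.Functor

variable {C D : Type*} [Category C] [Category D] [HasZeroMorphisms C] [HasZeroMorphisms D]
  (H : C ⥤ D) [H.PreservesZeroMorphisms] {P Q : C} (g : P ⟶ Q)

instance mono_map_kernel_ι [HasKernel g] [PreservesLimit (parallelPair g 0) H] :
    Mono (H.map (kernel.ι g)) :=
  Fork.IsLimit.mono (isLimitOfHasKernelOfPreservesLimit H g)

instance epi_map_cokernel_π [HasCokernel g] [PreservesColimit (parallelPair g 0) H] :
    Epi (H.map (cokernel.π g)) :=
  Cofork.IsColimit.epi (isColimitOfHasCokernelOfPreservesColimit H g)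

end CategoryTheory.Functor

namespace MVObj

variable {F G : A ⥤ B} {T : F ⟶ G} {X Y : MVObj F G T}

lemma mono_of_mono_fa_fb (f : X ⟶ Y) [Mono f.fa] [Mono f.fb] : Mono f :=
  ⟨fun _ _ e => MVHom.ext ((cancel_mono f.fa).1 (congrArg MVHom.fa e))
    ((cancel_mono f.fb).1 (congrArg MVHom.fb e))⟩

lemma epi_of_epi_fa_fb (f : X ⟶ Y) [Epi f.fa] [Epi f.fb] : Epi f :=
  ⟨fun _ _ e => MVHom.ext ((cancel_epi f.fa).1 (congrArg MVHom.fa e))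
    ((cancel_epi f.fb).1 (congrArg MVHom.fb e))⟩

section Preadditive

variable [Preadditive A] [Preadditive B] [F.Additive] [G.Additive]

def homSubgroup (X Y : MVObj F G T) : AddSubgroup ((X.a ⟶ Y.a) × (X.b ⟶ Y.b)) where
  carrier := {p | F.map p.1 ≫ Y.m = X.m ≫ p.2 ∧ X.n ≫ G.map p.1 = p.2 ≫ Y.n}
  add_mem' := by
    rintro _ _ ⟨h₁, h₂⟩ ⟨h₃, h₄⟩
    constructor <;> simp [h₁, h₂, h₃, h₄]
  zero_mem' := by constructor <;> simp
  neg_mem' := by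
    rintro _ ⟨h₁, h₂⟩
    constructor <;> simp [h₁, h₂]

def homEquivSubgroup (X Y : MVObj F G T) : (X ⟶ Y) ≃ homSubgroup X Y where
  toFun f := ⟨(f.fa, f.fb), f.comm_m, f.comm_n⟩
  invFun p := ⟨p.1.1, p.1.2, p.2.1, p.2.2⟩

noncomputable instance : Preadditive (MVObj F G T) where
  homGroup X Y := (homEquivSubgroup X Y).addCommGroup
  add_comp _ _ _ _ _ _ := MVHom.ext (Preadditive.add_comp ..) (Preadditive.add_comp ..)
  comp_add _ _ _ _ _ _ := MVHom.ext (Preadditive.comp_add ..) (Preadditive.comp_add ..)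

lemma fa_comp_eq_zero {Z : MVObj F G T} {f : X ⟶ Y} {g : Y ⟶ Z} (w : f ≫ g = 0) :
    f.fa ≫ g.fa = 0 :=
  congrArg MVHom.fa w

lemma fb_comp_eq_zero {Z : MVObj F G T} {f : X ⟶ Y} {g : Y ⟶ Z} (w : f ≫ g = 0) :
    f.fb ≫ g.fb = 0 :=
  congrArg MVHom.fb w

/-- The lift is computed componentwise; it commutes with `m` and `n` because both sides agree
after composing with the monos `ι.fb` and `G.map ι.fa`. -/
noncomputable def isLimitKernelForkOfComponents {K : MVObj F G T} {f : X ⟶ Y} (ι : K ⟶ X)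
    (w : ι ≫ f = 0) (ha : IsLimit (KernelFork.ofι ι.fa (fa_comp_eq_zero w)))
    (hb : IsLimit (KernelFork.ofι ι.fb (fb_comp_eq_zero w))) [Mono (G.map ι.fa)] :
    IsLimit (KernelFork.ofι ι w) :=
  have : Mono ι.fa := Fork.IsLimit.mono ha
  have : Mono ι.fb := Fork.IsLimit.mono hb
  have := mono_of_mono_fa_fb ι
  KernelFork.IsLimit.ofι' ι w fun g hg =>
    let la : {l // l ≫ ι.fa = g.fa} := KernelFork.IsLimit.lift' ha g.fa (fa_comp_eq_zero hg)
    let lb : {l // l ≫ ι.fb = g.fb} := KernelFork.IsLimit.lift' hb g.fb (fb_comp_eq_zero hg)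
    ⟨{ fa := la.1
       fb := lb.1
       comm_m := by
         rw [← cancel_mono ι.fb, Category.assoc, ← ι.comm_m, ← F.map_comp_assoc, la.2,
           Category.assoc, lb.2, g.comm_m]
       comm_n := by
         rw [← cancel_mono (G.map ι.fa), Category.assoc, Category.assoc, ι.comm_n,
           ← G.map_comp, la.2, ← Category.assoc, lb.2, g.comm_n] },
      MVHom.ext la.2 lb.2⟩

noncomputable def isColimitCokernelCoforkOfComponents {Q : MVObj F G T} {f : X ⟶ Y} (π : Y ⟶ Q)
    (w : f ≫ π = 0) (ha : IsColimit (CokernelCofork.ofπ π.fa (fa_comp_eq_zero w)))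
    (hb : IsColimit (CokernelCofork.ofπ π.fb (fb_comp_eq_zero w))) [Epi (F.map π.fa)] :
    IsColimit (CokernelCofork.ofπ π w) :=
  have : Epi π.fa := Cofork.IsColimit.epi ha
  have : Epi π.fb := Cofork.IsColimit.epi hb
  have := epi_of_epi_fa_fb π
  CokernelCofork.IsColimit.ofπ' π w fun g hg =>
    let da : {l // π.fa ≫ l = g.fa} :=
      CokernelCofork.IsColimit.desc' ha g.fa (fa_comp_eq_zero hg)
    let db : {l // π.fb ≫ l = g.fb} :=
      CokernelCofork.IsColimit.desc' hb g.fb (fb_comp_eq_zero hg)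
    ⟨{ fa := da.1
       fb := db.1
       comm_m := by
         rw [← cancel_epi (F.map π.fa), ← F.map_comp_assoc, da.2, ← Category.assoc, π.comm_m,
           Category.assoc, db.2, g.comm_m]
       comm_n := by
         rw [← cancel_epi π.fb, ← Category.assoc, ← π.comm_n, Category.assoc, ← G.map_comp,
           da.2, ← Category.assoc, db.2, g.comm_n] },
      MVHom.ext da.2 db.2⟩

end Preadditive

section Biproducts

variable [Preadditive A] [Preadditive B] [F.Additive] [G.Additive]
  [HasBinaryBiproducts A] [HasBinaryBiproducts B]

noncomputable def biprodObj (X Y : MVObj F G T) : MVObj F G T where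
  a := X.a ⊞ Y.a
  b := X.b ⊞ Y.b
  m := biprod.lift (F.map biprod.fst ≫ X.m) (F.map biprod.snd ≫ Y.m)
  n := biprod.desc (X.n ≫ G.map biprod.inl) (Y.n ≫ G.map biprod.inr)
  fac := by
    rw [biprod.lift_desc, Category.assoc, Category.assoc, reassoc_of% X.fac,
      reassoc_of% Y.fac, T.naturality_assoc, T.naturality_assoc, ← G.map_comp, ← G.map_comp,
      ← Preadditive.comp_add, ← G.map_add, biprod.total, G.map_id, Category.comp_id]

noncomputable def biprodBicone (X Y : MVObj F G T) : BinaryBicone X Y where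
  pt := biprodObj X Y
  fst := ⟨biprod.fst, biprod.fst, by simp [biprodObj],
    biprod.hom_ext' _ _ (by simp [biprodObj, ← G.map_comp]) (by simp [biprodObj, ← G.map_comp])⟩
  snd := ⟨biprod.snd, biprod.snd, by simp [biprodObj],
    biprod.hom_ext' _ _ (by simp [biprodObj, ← G.map_comp]) (by simp [biprodObj, ← G.map_comp])⟩
  inl := ⟨biprod.inl, biprod.inl,
    biprod.hom_ext _ _ (by simp [biprodObj, ← F.map_comp_assoc])
      (by simp [biprodObj, ← F.map_comp_assoc]), by simp [biprodObj]⟩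
  inr := ⟨biprod.inr, biprod.inr,
    biprod.hom_ext _ _ (by simp [biprodObj, ← F.map_comp_assoc])
      (by simp [biprodObj, ← F.map_comp_assoc]), by simp [biprodObj]⟩
  inl_fst := MVHom.ext biprod.inl_fst biprod.inl_fst
  inl_snd := MVHom.ext biprod.inl_snd biprod.inl_snd
  inr_fst := MVHom.ext biprod.inr_fst biprod.inr_fst
  inr_snd := MVHom.ext biprod.inr_snd biprod.inr_snd

instance : HasBinaryBiproducts (MVObj F G T) where
  has_binary_biproduct X Y := .mk
    ⟨biprodBicone X Y, isBinaryBilimitOfTotal _ (MVHom.ext biprod.total biprod.total)⟩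

end Biproducts

section ZeroObject

open ZeroObject

variable [Preadditive A] [Preadditive B] [F.Additive] [G.Additive]
  [HasZeroObject A] [HasZeroObject B]

noncomputable def zeroObj : MVObj F G T where
  a := 0
  b := 0
  m := 0
  n := 0
  fac := (F.map_isZero (isZero_zero A)).eq_of_src _ _

lemma isZero_zeroObj : IsZero (zeroObj : MVObj F G T) :=
  (IsZero.iff_id_eq_zero _).2 <|
    MVHom.ext ((isZero_zero A).eq_of_src _ _) ((isZero_zero B).eq_of_src _ _)

instance : HasZeroObject (MVObj F G T) :=
  isZero_zeroObj.hasZeroObject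

end ZeroObject

section Kernels

variable [Preadditive A] [Preadditive B] [F.Additive] [G.Additive]
  [HasKernels A] [HasKernels B] [PreservesLimitsOfShape WalkingParallelPair G]

noncomputable def kernelObj (f : X ⟶ Y) : MVObj F G T where
  a := kernel f.fa
  b := kernel f.fb
  m := kernel.lift f.fb (F.map (kernel.ι f.fa) ≫ X.m)
    (by simp [← f.comm_m, ← F.map_comp_assoc])
  n := kernel.lift (G.map f.fa) (kernel.ι f.fb ≫ X.n) (by simp [f.comm_n]) ≫
    (PreservesKernel.iso G f.fa).inv
  fac := (cancel_mono (G.map (kernel.ι f.fa))).1 <| by simp [X.fac]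

noncomputable def kernelι (f : X ⟶ Y) : kernelObj f ⟶ X where
  fa := kernel.ι f.fa
  fb := kernel.ι f.fb
  comm_m := (kernel.lift_ι _ _ _).symm
  comm_n := by simp [kernelObj]

lemma kernelι_comp (f : X ⟶ Y) : kernelι f ≫ f = 0 :=
  MVHom.ext (kernel.condition f.fa) (kernel.condition f.fb)

noncomputable def kernelIsLimit (f : X ⟶ Y) : IsLimit (KernelFork.ofι _ (kernelι_comp f)) :=
  have : Mono (G.map (kernelι f).fa) := Functor.mono_map_kernel_ι G f.fa
  isLimitKernelForkOfComponents _ _ (kernelIsKernel f.fa) (kernelIsKernel f.fb)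

instance : HasKernels (MVObj F G T) where
  has_limit f := .mk ⟨_, kernelIsLimit f⟩

lemma mono_fa (f : X ⟶ Y) [Mono f] : Mono f.fa :=
  Preadditive.mono_of_kernel_zero (congrArg MVHom.fa (zero_of_comp_mono f (kernelι_comp f)))

lemma mono_fb (f : X ⟶ Y) [Mono f] : Mono f.fb :=
  Preadditive.mono_of_kernel_zero (congrArg MVHom.fb (zero_of_comp_mono f (kernelι_comp f)))

end Kernels

section Cokernels

variable [Preadditive A] [Preadditive B] [F.Additive] [G.Additive]
  [HasCokernels A] [HasCokernels B] [PreservesColimitsOfShape WalkingParallelPair F]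

noncomputable def cokernelObj (f : X ⟶ Y) : MVObj F G T where
  a := cokernel f.fa
  b := cokernel f.fb
  m := (PreservesCokernel.iso F f.fa).hom ≫
    cokernel.desc (F.map f.fa) (Y.m ≫ cokernel.π f.fb) (by simp [reassoc_of% f.comm_m])
  n := cokernel.desc f.fb (Y.n ≫ G.map (cokernel.π f.fa))
    (by simp [← reassoc_of% f.comm_n, ← G.map_comp])
  fac := (cancel_epi (F.map (cokernel.π f.fa))).1 <| by simp [reassoc_of% Y.fac]

noncomputable def cokernelπ (f : X ⟶ Y) : Y ⟶ cokernelObj f where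
  fa := cokernel.π f.fa
  fb := cokernel.π f.fb
  comm_m := by simp [cokernelObj]
  comm_n := (cokernel.π_desc _ _ _).symm

lemma comp_cokernelπ (f : X ⟶ Y) : f ≫ cokernelπ f = 0 :=
  MVHom.ext (cokernel.condition f.fa) (cokernel.condition f.fb)

noncomputable def cokernelIsColimit (f : X ⟶ Y) :
    IsColimit (CokernelCofork.ofπ _ (comp_cokernelπ f)) :=
  have : Epi (F.map (cokernelπ f).fa) := Functor.epi_map_cokernel_π F f.fa
  isColimitCokernelCoforkOfComponents _ _ (cokernelIsCokernel f.fa) (cokernelIsCokernel f.fb)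

instance : HasCokernels (MVObj F G T) where
  has_colimit f := .mk ⟨_, cokernelIsColimit f⟩

lemma epi_fa (f : X ⟶ Y) [Epi f] : Epi f.fa :=
  Preadditive.epi_of_cokernel_zero (congrArg MVHom.fa (zero_of_epi_comp f (comp_cokernelπ f)))

lemma epi_fb (f : X ⟶ Y) [Epi f] : Epi f.fb :=
  Preadditive.epi_of_cokernel_zero (congrArg MVHom.fb (zero_of_epi_comp f (comp_cokernelπ f)))

end Cokernels

section Abelian

variable [Abelian A] [Abelian B] [F.Additive] [G.Additive]
  [PreservesFiniteColimits F] [PreservesFiniteLimits G]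

instance : IsNormalMonoCategory (MVObj F G T) where
  normalMonoOfMono f _ :=
    have := mono_fa f
    have := mono_fb f
    ⟨{ Z := cokernelObj f
       g := cokernelπ f
       w := comp_cokernelπ f
       isLimit := isLimitKernelForkOfComponents f _
        (Abelian.monoIsKernelOfCokernel _ (colimit.isColimit _))
        (Abelian.monoIsKernelOfCokernel _ (colimit.isColimit _)) }⟩

instance : IsNormalEpiCategory (MVObj F G T) where
  normalEpiOfEpi f _ :=
    have := epi_fa f
    have := epi_fb f
    ⟨{ W := kernelObj f
       g := kernelι f
       w := kernelι_comp f
       isColimit := isColimitCokernelCoforkOfComponents f _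
        (Abelian.epiIsCokernelOfKernel _ (limit.isLimit _))
        (Abelian.epiIsCokernelOfKernel _ (limit.isLimit _)) }⟩

noncomputable instance : Abelian (MVObj F G T) where
  has_finite_products := hasFiniteProducts_of_has_binary_and_terminal

end Abelian

end MVObj

/-- **MacPherson–Vilonen.** Let `A`, `B` be abelian categories,
`F : A ⥤ B` a right exact additive functor, `G : A ⥤ B` a left exact additive
functor, and `T : F ⟶ G` a natural transformation.  Then the category `C(F,G,T)`
of quadruples `(A, B, m : F A ⟶ B, n : B ⟶ G A)` with `n ∘ m = T_A` is abelian. -/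
theorem stmt_0 [Abelian A] [Abelian B] (F G : A ⥤ B) [F.Additive] [G.Additive]
    [PreservesFiniteColimits F] [PreservesFiniteLimits G] (T : F ⟶ G) :
    Nonempty (Abelian (MVObj F G T)) :=
  ⟨inferInstance⟩
end

section
/- Let K be a pretriangulated category with shift functor T. Given two distinguished triangles A →u B →v C →w T(A) and A' →u' B' →v' C' →w' T(A'), and morphisms β : B → B', γ : C → C' with v' ∘ β = γ ∘ v, there exists a morphism α : A → A' such that (α, β, γ) is a morphism of triangles. If moreover Hom_K(B, T⁻¹(C')) = 0 and Hom_K(C, B') = 0, then this morphism α is unique. -/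
open CategoryTheory CategoryTheory.Limits CategoryTheory.Pretriangulated

universe v u

namespace CategoryTheory.Pretriangulated

-- Qualified because `Triangle.shiftFunctor` would capture the name inside `namespace Triangle`.
variable {K : Type u} [Category.{v} K] [HasZeroObject K] [HasShift K ℤ]
  [Preadditive K] [∀ n : ℤ, (CategoryTheory.shiftFunctor K n).Additive] [Pretriangulated K]

namespace Triangle

variable (T : Triangle K) (hT : T ∈ distTriang K)
include hT

lemma yoneda_exact₁ {X : K} (f : T.obj₁ ⟶ X) (hf : T.mor₃ ≫ f⟦(1 : ℤ)⟧' = 0) :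
    ∃ g : T.obj₂ ⟶ X, f = T.mor₁ ≫ g := by
  obtain ⟨g, hg⟩ := yoneda_exact₂ _ (rot_of_distTriang _ (rot_of_distTriang _ hT)) _ hf
  obtain ⟨h, rfl⟩ : ∃ h : T.obj₂ ⟶ X, h⟦(1 : ℤ)⟧' = g := Functor.map_surjective _ g
  refine ⟨-h, Functor.map_injective (CategoryTheory.shiftFunctor K (1 : ℤ)) ?_⟩
  rw [hg, Functor.map_comp, Functor.map_neg, Preadditive.comp_neg]
  exact Preadditive.neg_comp _ _

lemma eq_zero_of_mor₁_comp_eq_zero {X : K} (g : T.obj₂ ⟶ X) (hg : T.mor₁ ≫ g = 0)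
    (hX : ∀ f : T.obj₃ ⟶ X, f = 0) : g = 0 := by
  obtain ⟨k, rfl⟩ := yoneda_exact₂ T hT g hg
  rw [hX k, comp_zero]

lemma eq_zero_of_comp_mor₁_eq_zero {X : K} (g : X ⟶ T.obj₁) (hg : g ≫ T.mor₁ = 0)
    (hX : ∀ f : X ⟶ T.obj₃⟦(-1 : ℤ)⟧, f = 0) : g = 0 := by
  obtain ⟨k, rfl⟩ := coyoneda_exact₂ _ (inv_rot_of_distTriang _ hT) g hg
  rw [hX k]
  exact zero_comp

end Triangle

/-- `δ` factors as `u ≫ h`; then `h ≫ u'` vanishes on `u`, so it factors through `C ⟶ B'` and is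
zero, and therefore `h` factors through `B ⟶ C'⟦-1⟧`. -/
lemma eq_zero_of_comp_mor₁_eq_zero_of_mor₃_comp_eq_zero (T₁ T₂ : Triangle K)
    (hT₁ : T₁ ∈ distTriang K) (hT₂ : T₂ ∈ distTriang K)
    (H₁ : ∀ f : T₁.obj₂ ⟶ T₂.obj₃⟦(-1 : ℤ)⟧, f = 0) (H₂ : ∀ f : T₁.obj₃ ⟶ T₂.obj₂, f = 0)
    (δ : T₁.obj₁ ⟶ T₂.obj₁) (h₁ : δ ≫ T₂.mor₁ = 0) (h₃ : T₁.mor₃ ≫ δ⟦(1 : ℤ)⟧' = 0) :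
    δ = 0 := by
  obtain ⟨h, rfl⟩ := T₁.yoneda_exact₁ hT₁ δ h₃
  have hh : h ≫ T₂.mor₁ = 0 :=
    T₁.eq_zero_of_mor₁_comp_eq_zero hT₁ _ (by simpa using h₁) H₂
  rw [T₂.eq_zero_of_comp_mor₁_eq_zero hT₂ h hh H₁, comp_zero]

end CategoryTheory.Pretriangulated

/-- In a pretriangulated category `K` with shift `T = ⟦1⟧`, given
distinguished triangles `A → B → C → T A` and `A' → B' → C' → T A'` and morphisms
`β : B ⟶ B'`, `γ : C ⟶ C'` with `v' ∘ β = γ ∘ v`, there is a morphism `α : A ⟶ A'`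
making `(α, β, γ)` a morphism of triangles; and if moreover `Hom(B, T⁻¹ C') = 0`
and `Hom(C, B') = 0`, this `α` is unique. -/
theorem stmt_1 {K : Type u} [Category.{v} K] [HasZeroObject K] [HasShift K ℤ]
    [Preadditive K] [∀ n : ℤ, (shiftFunctor K n).Additive] [Pretriangulated K]
    (T₁ T₂ : Triangle K) (hT₁ : T₁ ∈ distTriang K) (hT₂ : T₂ ∈ distTriang K)
    (β : T₁.obj₂ ⟶ T₂.obj₂) (γ : T₁.obj₃ ⟶ T₂.obj₃)
    (hcomm : T₁.mor₂ ≫ γ = β ≫ T₂.mor₂) :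
    (∃ α : T₁.obj₁ ⟶ T₂.obj₁,
        T₁.mor₁ ≫ β = α ≫ T₂.mor₁ ∧ T₁.mor₃ ≫ α⟦(1 : ℤ)⟧' = γ ≫ T₂.mor₃) ∧
    ((∀ f : T₁.obj₂ ⟶ T₂.obj₃⟦(-1 : ℤ)⟧, f = 0) →
      (∀ f : T₁.obj₃ ⟶ T₂.obj₂, f = 0) →
      ∃! α : T₁.obj₁ ⟶ T₂.obj₁,
        T₁.mor₁ ≫ β = α ≫ T₂.mor₁ ∧ T₁.mor₃ ≫ α⟦(1 : ℤ)⟧' = γ ≫ T₂.mor₃) := by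
  obtain ⟨α, hα₁, hα₃⟩ := complete_distinguished_triangle_morphism₁ T₁ T₂ hT₁ hT₂ β γ hcomm
  refine ⟨⟨α, hα₁, hα₃⟩, fun H₁ H₂ => ⟨α, ⟨hα₁, hα₃⟩, fun α' ⟨hα'₁, hα'₃⟩ => ?_⟩⟩
  rw [← sub_eq_zero]
  refine eq_zero_of_comp_mor₁_eq_zero_of_mor₃_comp_eq_zero T₁ T₂ hT₁ hT₂ H₁ H₂ _ ?_ ?_
  · rw [Preadditive.sub_comp, ← hα₁, ← hα'₁, sub_self]
  · rw [Functor.map_sub, Preadditive.comp_sub, hα₃, hα'₃, sub_self]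
end

section
/- Let X be a topological space, U ⊆ X an open subset with open embedding j : U → X, and Z = X \ U with closed embedding i : Z → X. For any sheaf F (of sets, or of modules) on X, the commutative square with vertices F, i_*i⁻¹F, j_*j⁻¹F, i_*i⁻¹j_*j⁻¹F, formed by the unit maps F → i_*i⁻¹F, F → j_*j⁻¹F and by i_*i⁻¹ applied to the unit F → j_*j⁻¹F, is a pullback (cartesian) square. -/
/-!
Stalks detect pullbacks of sheaves of sets, since stalk functors preserve finite limits and
detect isomorphisms. At a point of `U` the unit `F ⟶ j_*j⁻¹F` is an isomorphism on stalks,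
and so is the right-hand vertical map, because both `i_*`-sheaves have one-point stalks off the
closed set `Z`. At a point `i z` the two horizontal units are isomorphisms on stalks, since `i` is
an embedding. In either case the square of stalks has two parallel isomorphisms, hence is
cartesian.
-/

open CategoryTheory TopologicalSpace TopCat Limits Opposite

universe w

namespace TopCat

namespace Presheaf

section Pushforward

variable {X Y : TopCat.{w}} {C : Type*} [Category.{w} C] [HasColimits C]

lemma stalkPushforward_naturality (f : X ⟶ Y) {F G : X.Presheaf C} (φ : F ⟶ G) (x : X) :
    (stalkFunctor C (f x)).map ((pushforward C f).map φ) ≫ G.stalkPushforward C f x =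
      F.stalkPushforward C f x ≫ (stalkFunctor C x).map φ := by
  refine stalk_hom_ext _ fun U hxU ↦ ?_
  erw [stalkFunctor_map_germ_assoc, stalkPushforward_germ, stalkPushforward_germ_assoc,
    stalkFunctor_map_germ]
  rfl

lemma isIso_stalkFunctor_map_pushforward_map {f : X ⟶ Y} (hf : Topology.IsInducing f)
    {F G : X.Presheaf C} (φ : F ⟶ G) (x : X) [IsIso ((stalkFunctor C x).map φ)] :
    IsIso ((stalkFunctor C (f x)).map ((pushforward C f).map φ)) := by
  have hF := stalkPushforward.stalkPushforward_iso_of_isInducing C hf F x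
  have := stalkPushforward.stalkPushforward_iso_of_isInducing C hf G x
  exact IsIso.of_isIso_fac_right (f := G.stalkPushforward C f x)
    (hh := IsIso.comp_isIso' hF ‹_›) (stalkPushforward_naturality f φ x)

lemma isIso_stalkFunctor_map_pullbackPushforwardAdjunction_unit {f : X ⟶ Y}
    (hf : Topology.IsInducing f) (F : Y.Presheaf C) (x : X) :
    IsIso ((stalkFunctor C (f x)).map ((pullbackPushforwardAdjunction C f).unit.app F)) := by
  have := stalkPushforward.stalkPushforward_iso_of_isInducing C hf ((pullback C f).obj F) x
  exact (isIso_comp_right_iff _ (stalkPushforward C f ((pullback C f).obj F) x)).mp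
    (stalkPullbackIso C f F x).isIso_hom

end Pushforward

variable {X : TopCat.{w}}

instance stalkFunctor_preservesFiniteLimits (x : X) :
    PreservesFiniteLimits (stalkFunctor (Type w) x) :=
  have : PreservesFiniteLimits
      ((Functor.whiskeringLeft _ _ (Type w)).obj (OpenNhds.inclusion x).op) :=
    ⟨fun _ ↦ inferInstance⟩
  comp_preservesFiniteLimits _ colim

noncomputable def isTerminalStalkOfIsTerminalObj {P : X.Presheaf (Type w)} {x : X}
    {V : Opens X} (hx : x ∈ V) (h : ∀ W ≤ V, IsTerminal (P.obj (op W))) :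
    IsTerminal (P.stalk x) :=
  have hunique (W : Opens X) (hW : W ≤ V) : Unique (P.obj (op W)) :=
    Types.isTerminalEquivUnique _ (h W hW)
  (Types.isTerminalEquivUnique _).symm
    { default := P.germ V x hx (hunique V le_rfl).default
      uniq := fun a ↦ by
        obtain ⟨W, hxW, s, rfl⟩ := P.exists_germ_eq a
        rw [← P.germ_res_apply (homOfLE inf_le_left : W ⊓ V ⟶ W) x ⟨hxW, hx⟩,
          ← P.germ_res_apply (homOfLE inf_le_right : W ⊓ V ⟶ V) x ⟨hxW, hx⟩]
        have := (hunique _ (inf_le_right : W ⊓ V ≤ V)).instSubsingleton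
        exact congrArg _ (Subsingleton.elim _ _) }

end Presheaf

namespace Sheaf

section Unit

variable {X Y : TopCat.{w}}

open Functor.sheafPullbackConstruction

lemma sheafAdjunctionContinuous_unit_app_hom (f : X ⟶ Y) (F : Y.Sheaf (Type w)) :
    ((sheafAdjunctionContinuous (Opens.map f) (Type w) (Opens.grothendieckTopology Y)
      (Opens.grothendieckTopology X)).unit.app F).hom =
      (Presheaf.pullbackPushforwardAdjunction (Type w) f).unit.app F.obj ≫
        (Presheaf.pushforward (Type w) f).map
          (toSheafify _ ((Presheaf.pullback (Type w) f).obj F.obj)) :=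
  -- the identity components of the restricted adjunction vanish definitionally in `Type w`
  Adjunction.map_restrictFullyFaithful_unit_app
    (adj := ((Opens.map f).op.lanAdjunction (Type w)).comp
      (sheafificationAdjunction (Opens.grothendieckTopology X) (Type w)))
    (L := sheafPullback (Opens.map f) (Type w) (Opens.grothendieckTopology Y)
      (Opens.grothendieckTopology X))
    (R := (Opens.map f).sheafPushforwardContinuous (Type w) (Opens.grothendieckTopology Y)
      (Opens.grothendieckTopology X))
    (fullyFaithfulSheafToPresheaf (Opens.grothendieckTopology Y) (Type w))
    (Functor.FullyFaithful.id _) (Iso.refl _) (Iso.refl _) F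

/-- `Sheaf.pullback` is an abstract left adjoint, so its unit is compared with the unit of the
explicit construction (left Kan extension followed by sheafification). -/
lemma isIso_stalkFunctor_map_pullbackPushforwardAdjunction_unit {f : X ⟶ Y}
    (hf : Topology.IsInducing f) (F : Y.Sheaf (Type w)) (x : X) :
    IsIso ((Presheaf.stalkFunctor (Type w) (f x)).map
      ((pullbackPushforwardAdjunction (Type w) f).unit.app F).hom) := by
  let adj := sheafAdjunctionContinuous (Opens.map f) (Type w) (Opens.grothendieckTopology Y)
    (Opens.grothendieckTopology X)
  have hadj : IsIso ((Presheaf.stalkFunctor (Type w) (f x)).map (adj.unit.app F).hom) := by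
    rw [sheafAdjunctionContinuous_unit_app_hom]
    erw [Functor.map_comp]
    have := Presheaf.stalkFunctor_map_unit_toSheafify_isIso x (Type w)
      ((Presheaf.pullback (Type w) f).obj F.obj)
    exact IsIso.comp_isIso'
      (Presheaf.isIso_stalkFunctor_map_pullbackPushforwardAdjunction_unit hf F.obj x)
      (Presheaf.isIso_stalkFunctor_map_pushforward_map hf (toSheafify _ _) x)
  let Φ := Sheaf.forget (Type w) Y ⋙ Presheaf.stalkFunctor (Type w) (f x)
  have e := Φ.congr_map
    (Adjunction.unit_leftAdjointUniq_hom_app (pullbackPushforwardAdjunction (Type w) f) adj F)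
  rw [Φ.map_comp] at e
  exact (isIso_comp_right_iff _ (Φ.map ((pushforward (Type w) f).map
    ((Adjunction.leftAdjointUniq (pullbackPushforwardAdjunction (Type w) f) adj).app F).hom))).mp
    (e ▸ hadj)

end Unit

variable {X Z : TopCat.{w}}

noncomputable def isTerminalStalkPushforwardOfNotMemClosure {i : Z ⟶ X}
    (G : Z.Sheaf (Type w)) {x : X} (hx : x ∉ closure (Set.range i)) :
    IsTerminal (((pushforward (Type w) i).obj G).presheaf.stalk x) :=
  Presheaf.isTerminalStalkOfIsTerminalObj (V := ⟨_, isClosed_closure.isOpen_compl⟩) hx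
    fun _ hW ↦ G.isTerminalOfEqEmpty <| by
      ext z
      simpa using fun hz ↦ hW hz (subset_closure ⟨z, rfl⟩)

lemma isPullback_of_isPullback_stalkFunctor_map {P L R B : X.Sheaf (Type w)}
    {fst : P ⟶ L} {snd : P ⟶ R} {f : L ⟶ B} {g : R ⟶ B} (comm : fst ≫ f = snd ≫ g)
    (h : ∀ x : X, IsPullback ((Presheaf.stalkFunctor (Type w) x).map fst.hom)
      ((Presheaf.stalkFunctor (Type w) x).map snd.hom)
      ((Presheaf.stalkFunctor (Type w) x).map f.hom)
      ((Presheaf.stalkFunctor (Type w) x).map g.hom)) :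
    IsPullback fst snd f g := by
  let c : P ⟶ Limits.pullback f g := Limits.pullback.lift fst snd comm
  have (x : X) : IsIso ((Presheaf.stalkFunctor (Type w) x).map c.hom) := by
    let Φ := Sheaf.forget (Type w) X ⋙ Presheaf.stalkFunctor (Type w) x
    have hΦ := (IsPullback.of_hasPullback f g).map Φ
    have hc : Φ.map c = ((h x).isoIsPullback _ _ hΦ).hom := by
      apply hΦ.hom_ext
      · rw [← Φ.map_comp, Limits.pullback.lift_fst]
        exact (IsPullback.isoIsPullback_hom_fst _ _ (h x) hΦ).symm
      · rw [← Φ.map_comp, Limits.pullback.lift_snd]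
        exact (IsPullback.isoIsPullback_hom_snd _ _ (h x) hΦ).symm
    exact hc ▸ Iso.isIso_hom _
  have := Presheaf.isIso_of_stalkFunctor_map_iso c
  exact IsPullback.of_iso_pullback ⟨comm⟩ (asIso c) (Limits.pullback.lift_fst _ _ _)
    (Limits.pullback.lift_snd _ _ _)

end Sheaf

end TopCat

/-- Let `X` be a topological space, `U ⊆ X` open with open
inclusion `j`, and `Z = X \ U` with closed embedding `i`.  For every sheaf `F`
on `X`, the square formed by the unit maps `F ⟶ i_*i⁻¹F`, `F ⟶ j_*j⁻¹F` and by
`i_*i⁻¹` applied to the unit `F ⟶ j_*j⁻¹F` is a pullback (cartesian) square. -/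
theorem stmt_2 {X : TopCat.{w}} (U : Opens X) {Z : TopCat.{w}} (i : Z ⟶ X)
    (hi : Topology.IsClosedEmbedding i) (hrange : Set.range i = (U : Set X)ᶜ)
    (F : TopCat.Sheaf (Type w) X) :
    IsPullback
      ((Sheaf.pullbackPushforwardAdjunction (Type w) i).unit.app F)
      ((Sheaf.pullbackPushforwardAdjunction (Type w) U.inclusion').unit.app F)
      ((Sheaf.pullback (Type w) i ⋙ Sheaf.pushforward (Type w) i).map
        ((Sheaf.pullbackPushforwardAdjunction (Type w) U.inclusion').unit.app F))
      ((Sheaf.pullbackPushforwardAdjunction (Type w) i).unit.app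
        ((Sheaf.pullback (Type w) U.inclusion' ⋙
          Sheaf.pushforward (Type w) U.inclusion').obj F)) := by
  set ηj := (Sheaf.pullbackPushforwardAdjunction (Type w) U.inclusion').unit.app F
  have comm := ((Sheaf.pullbackPushforwardAdjunction (Type w) i).unit.naturality ηj).symm
  refine Sheaf.isPullback_of_isPullback_stalkFunctor_map comm fun x ↦ ?_
  have hsq := (CommSq.mk comm).map (Sheaf.forget (Type w) X ⋙ Presheaf.stalkFunctor (Type w) x)
  by_cases hx : x ∈ U
  · have hxi : x ∉ closure (Set.range i) := by
      rwa [hi.isClosed_range.closure_eq, hrange, Set.notMem_compl_iff]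
    have : IsIso ((Presheaf.stalkFunctor (Type w) x).map ηj.hom) :=
      Sheaf.isIso_stalkFunctor_map_pullbackPushforwardAdjunction_unit
        U.isOpenEmbedding.isInducing F ⟨x, hx⟩
    have : IsIso ((Presheaf.stalkFunctor (Type w) x).map
        ((Sheaf.pullback (Type w) i ⋙ Sheaf.pushforward (Type w) i).map ηj).hom) :=
      isIso_of_isTerminal (Sheaf.isTerminalStalkPushforwardOfNotMemClosure _ hxi)
        (Sheaf.isTerminalStalkPushforwardOfNotMemClosure _ hxi) _
    exact IsPullback.of_vert_isIso hsq
  · obtain ⟨z, rfl⟩ : x ∈ Set.range i := hrange ▸ hx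
    have := Sheaf.isIso_stalkFunctor_map_pullbackPushforwardAdjunction_unit hi.isInducing F z
    have := Sheaf.isIso_stalkFunctor_map_pullbackPushforwardAdjunction_unit hi.isInducing
      ((Sheaf.pullback (Type w) U.inclusion' ⋙ Sheaf.pushforward (Type w) U.inclusion').obj F) z
    exact IsPullback.of_horiz_isIso hsq
end

section
/- Let σ ⊆ ℝⁿ be a rational convex polyhedral cone (generated by finitely many vectors in ℤⁿ). Then the monoid σ̌ ∩ ℤⁿ, where σ̌ is the dual cone of σ, is finitely generated. -/
/-!
Writing `u = p - q` with `p, q ∈ ℕⁿ` and introducing slack variables `r ∈ ℕᵐ`, the lattice points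
of the dual cone are the images of the solutions of `A (p - q) = r` in `ℕⁿ × ℕⁿ × ℕᵐ`, where `A`
is the matrix whose rows are the generators of `σ`. These solutions form the equalizer of two
additive maps out of a well-quasi-ordered canonically ordered monoid, which is finitely generated
by Dickson's lemma (`AddSubmonoid.fg_eqLocusM`).
-/

open Matrix

theorem AddMonoidHom.exists_finset_nonneg_iff_mem_closure {κ μ : Type*} [Finite κ] [Finite μ]
    (A : (κ → ℤ) →+ (μ → ℤ)) :
    ∃ s : Finset (κ → ℤ), ∀ u, 0 ≤ A u ↔ u ∈ AddSubmonoid.closure (s : Set (κ → ℤ)) := by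
  let pos : (κ → ℕ) × (κ → ℕ) × (μ → ℕ) →+ (κ → ℤ) :=
    ((Nat.castAddMonoidHom ℤ).compLeft κ).comp (AddMonoidHom.fst _ _)
  let neg : (κ → ℕ) × (κ → ℕ) × (μ → ℕ) →+ (κ → ℤ) :=
    ((Nat.castAddMonoidHom ℤ).compLeft κ).comp
      ((AddMonoidHom.fst _ _).comp (AddMonoidHom.snd _ _))
  let slack : (κ → ℕ) × (κ → ℕ) × (μ → ℕ) →+ (μ → ℤ) :=
    ((Nat.castAddMonoidHom ℤ).compLeft μ).comp
      ((AddMonoidHom.snd _ _).comp (AddMonoidHom.snd _ _))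
  obtain ⟨s, hs⟩ := (AddSubmonoid.fg_eqLocusM (A.comp (pos - neg)) slack).map (pos - neg)
  refine ⟨s, fun u => ?_⟩
  rw [hs]
  constructor
  · intro hu
    let x := (fun j => (u j).toNat, fun j => (-u j).toNat, fun i => (A u i).toNat)
    have hx : (pos - neg) x = u := by
      ext j; simp [x, pos, neg]
    refine ⟨x, ?_, hx⟩
    show A ((pos - neg) x) = slack x
    ext i
    simp [hx, x, slack, Int.toNat_of_nonneg (hu i)]
  · rintro ⟨x, hx, rfl⟩ i
    rw [show A ((pos - neg) x) = slack x from hx]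
    exact Int.natCast_nonneg _

theorem forall_nonneg_dotProduct_cone_iff {ι κ R : Type*} [Fintype ι] [Fintype κ]
    [CommSemiring R] [PartialOrder R] [IsOrderedRing R] (w : ι → κ → R) (u : κ → R) :
    (∀ c : ι → R, (∀ i, 0 ≤ c i) → 0 ≤ u ⬝ᵥ ∑ i, c i • w i) ↔ ∀ i, 0 ≤ u ⬝ᵥ w i := by
  classical
  refine ⟨fun h i => ?_, fun h c hc => ?_⟩
  · simpa [Pi.single_apply] using h (Pi.single i 1) (Pi.single_nonneg.2 zero_le_one)
  · simp only [dotProduct_sum, dotProduct_smul, smul_eq_mul]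
    exact Finset.sum_nonneg fun i _ => mul_nonneg (hc i) (h i)

/-- **Gordan's lemma.** Let `σ ⊆ ℝⁿ` be a rational convex polyhedral
cone, generated by finitely many integer vectors `v₁, …, v_m`.  Then the monoid
`σ̌ ∩ ℤⁿ` of lattice points of the dual cone is finitely generated: there is a
finite set `s` of lattice points such that an integer vector lies in the dual cone
iff it lies in the additive submonoid generated by `s`. -/
theorem stmt_8 {n m : ℕ} (v : Fin m → (Fin n → ℤ))
    (σ : Set (Fin n → ℝ))
    (hσ : σ = {x | ∃ c : Fin m → ℝ, (∀ i, 0 ≤ c i) ∧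
      x = ∑ i, c i • (fun j => (v i j : ℝ))}) :
    ∃ s : Finset (Fin n → ℤ),
      (∀ u ∈ s, ∀ x ∈ σ, 0 ≤ ∑ j, (u j : ℝ) * x j) ∧
      ∀ u : Fin n → ℤ,
        (∀ x ∈ σ, 0 ≤ ∑ j, (u j : ℝ) * x j) ↔ u ∈ AddSubmonoid.closure (s : Set (Fin n → ℤ)) := by
  have hdual : ∀ u : Fin n → ℤ,
      (∀ x ∈ σ, 0 ≤ ∑ j, (u j : ℝ) * x j) ↔ 0 ≤ mulVecLin (of v) u := fun u =>
    calc (∀ x ∈ σ, 0 ≤ ∑ j, (u j : ℝ) * x j)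
        ↔ ∀ c : Fin m → ℝ, (∀ i, 0 ≤ c i) →
            0 ≤ (fun j => (u j : ℝ)) ⬝ᵥ ∑ i, c i • fun j => (v i j : ℝ) := by
          subst hσ
          exact ⟨fun h c hc => h _ ⟨c, hc, rfl⟩, fun h x ⟨c, hc, hx⟩ => hx ▸ h c hc⟩
      _ ↔ ∀ i, 0 ≤ (fun j => (u j : ℝ)) ⬝ᵥ fun j => (v i j : ℝ) :=
          forall_nonneg_dotProduct_cone_iff _ _
      _ ↔ ∀ i, 0 ≤ u ⬝ᵥ v i := by
          simp only [dotProduct, ← Int.cast_mul, ← Int.cast_sum, Int.cast_nonneg_iff]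
      _ ↔ 0 ≤ mulVecLin (of v) u := by
          simp only [Pi.le_def, dotProduct_comm u]; rfl
  obtain ⟨s, hs⟩ := (mulVecLin (of v)).toAddMonoidHom.exists_finset_nonneg_iff_mem_closure
  simp only [hdual]
  exact ⟨s, fun u hu => (hs u).2 (AddSubmonoid.subset_closure hu), hs⟩
end
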